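/- arXiv:2207.07488 — 4 statements merged into one kernel-verified Lean document; each statement's English description precedes it below -/
import Mathlib

section
/- Let V be a finite-dimensional real inner product space with inner product (K·,·), decomposed into subspaces V = V₀ + V₁ + ... + V_m (not necessarily a direct sum). Let P_j : V → V_j be the K-orthogonal projections and P = P₀ + ... + P_m. Suppose: (i) for every v ∈ V there exists a decomposition v = Σ_j v_j with v_j ∈ V_j and Σ_j |v_j|²_K ≤ C₁ |v|²_K; (ii) every decomposition v = Σ_j v_j with v_j ∈ V_j satisfies |v|²_K ≤ C₂ Σ_j |v_j|²_K. Then C₁⁻¹ |v|²_K ≤ (K P v, v) ≤ C₂ |v|²_K for all v ∈ V; in particular every eigenvalue λ of P satisfies C₁⁻¹ ≤ λ ≤ C₂. -/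
open scoped BigOperators RealInnerProductSpace

private lemma K_cauchy_schwarz {V : Type} [NormedAddCommGroup V] [InnerProductSpace ℝ V]
    (K : V →ₗ[ℝ] V) (hKsym : ∀ u v : V, ⟪K u, v⟫ = ⟪u, K v⟫)
    (hKnn : ∀ v : V, 0 ≤ ⟪K v, v⟫) (u w : V) :
    ⟪K u, w⟫ ^ 2 ≤ ⟪K u, u⟫ * ⟪K w, w⟫ := by
  have h1 : ⟪K w, u⟫ = ⟪K u, w⟫ := by rw [hKsym, real_inner_comm]
  have key : ∀ x : ℝ, 0 ≤ ⟪K w, w⟫ * (x * x) + (2 * ⟪K u, w⟫) * x + ⟪K u, u⟫ := by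
    intro x
    have h0 := hKnn (u + x • w)
    have expand : ⟪K (u + x • w), u + x • w⟫ =
        ⟪K w, w⟫ * (x * x) + (2 * ⟪K u, w⟫) * x + ⟪K u, u⟫ := by
      rw [map_add, map_smul]
      simp only [inner_add_left, inner_add_right, real_inner_smul_left,
        real_inner_smul_right, LinearMap.smul_apply, h1]
      ring
    rw [expand] at h0
    exact h0
  have hd := discrim_le_zero key
  rw [discrim] at hd
  nlinarith

/-- Additive Schwarz spectral bound: if the subspace decomposition
`V = V₀ + ... + V_m` admits a stable decomposition with constant `C₁` and every
decomposition is bounded below with constant `C₂`, then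
`C₁⁻¹ |v|²_K ≤ (K P v, v) ≤ C₂ |v|²_K` for `P = Σ P_j`, and in particular every
eigenvalue `λ` of `P` satisfies `C₁⁻¹ ≤ λ ≤ C₂`. -/
theorem additive_schwarz_spectral_bound
    {V : Type} [NormedAddCommGroup V] [InnerProductSpace ℝ V] [FiniteDimensional ℝ V]
    (K : V →ₗ[ℝ] V)
    (hKsym : ∀ u v : V, ⟪K u, v⟫ = ⟪u, K v⟫)
    (hKpos : ∀ v : V, v ≠ 0 → 0 < ⟪K v, v⟫)
    (m : ℕ) (Vsub : Fin (m + 1) → Submodule ℝ V)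
    (P : Fin (m + 1) → V →ₗ[ℝ] V)
    (hPmem : ∀ j v, P j v ∈ Vsub j)
    (hPproj : ∀ j v, ∀ w ∈ Vsub j, ⟪K (P j v), w⟫ = ⟪K v, w⟫)
    (C₁ C₂ : ℝ) (hC₁ : 0 < C₁) (hC₂ : 0 < C₂)
    (hdecomp : ∀ v : V, ∃ vj : Fin (m + 1) → V,
      (∀ j, vj j ∈ Vsub j) ∧ v = ∑ j, vj j ∧
      (∑ j, ⟪K (vj j), vj j⟫) ≤ C₁ * ⟪K v, v⟫)
    (hstable : ∀ (v : V) (vj : Fin (m + 1) → V),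
      (∀ j, vj j ∈ Vsub j) → v = ∑ j, vj j →
      ⟪K v, v⟫ ≤ C₂ * ∑ j, ⟪K (vj j), vj j⟫) :
    (∀ v : V,
      C₁⁻¹ * ⟪K v, v⟫ ≤ ⟪K ((∑ j, P j) v), v⟫ ∧
      ⟪K ((∑ j, P j) v), v⟫ ≤ C₂ * ⟪K v, v⟫) ∧
    (∀ (lam : ℝ) (v : V), v ≠ 0 → (∑ j, P j) v = lam • v →
      C₁⁻¹ ≤ lam ∧ lam ≤ C₂) := by
  have hKnn : ∀ v : V, 0 ≤ ⟪K v, v⟫ := by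
    intro v
    by_cases hv : v = 0
    · simp [hv]
    · exact (hKpos v hv).le
  -- key identity: ⟪K (P v), v⟫ = ∑ a_j where a_j = ⟪K (P_j v), P_j v⟫
  have hQ : ∀ v : V, (∑ j, P j) v = ∑ j, P j v := by
    intro v; simp [LinearMap.sum_apply]
  have hkey : ∀ v : V, ⟪K ((∑ j, P j) v), v⟫ = ∑ j, ⟪K (P j v), P j v⟫ := by
    intro v
    rw [hQ, map_sum, sum_inner]
    refine Finset.sum_congr rfl fun j _ => ?_
    rw [hKsym, real_inner_comm, ← hPproj j v (P j v) (hPmem j v)]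
  have main : ∀ v : V,
      C₁⁻¹ * ⟪K v, v⟫ ≤ ⟪K ((∑ j, P j) v), v⟫ ∧
      ⟪K ((∑ j, P j) v), v⟫ ≤ C₂ * ⟪K v, v⟫ := by
    intro v
    set t := ⟪K ((∑ j, P j) v), v⟫ with ht
    set X := ⟪K v, v⟫ with hX
    have hXnn : 0 ≤ X := hKnn v
    have htnn : 0 ≤ t := by
      rw [ht, hkey]
      exact Finset.sum_nonneg fun j _ => hKnn _
    constructor
    · -- lower bound
      obtain ⟨vj, hmem, hsum, hbound⟩ := hdecomp v
      have hX1 : X = ∑ j, ⟪K (P j v), vj j⟫ := by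
        rw [hX]
        nth_rewrite 2 [hsum]
        rw [inner_sum]
        exact Finset.sum_congr rfl fun j _ => (hPproj j v (vj j) (hmem j)).symm
      have hterm : ∀ j, ⟪K (P j v), vj j⟫ ≤
          Real.sqrt ⟪K (P j v), P j v⟫ * Real.sqrt ⟪K (vj j), vj j⟫ := by
        intro j
        have hcs := K_cauchy_schwarz K hKsym hKnn (P j v) (vj j)
        have h2 : ⟪K (P j v), vj j⟫ ≤ Real.sqrt (⟪K (P j v), P j v⟫ * ⟪K (vj j), vj j⟫) := by
          have := Real.sqrt_le_sqrt hcs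
          rw [Real.sqrt_sq_eq_abs] at this
          exact (le_abs_self _).trans this
        rw [Real.sqrt_mul (hKnn _)] at h2
        exact h2
      have hS : X ≤ ∑ j, Real.sqrt ⟪K (P j v), P j v⟫ * Real.sqrt ⟪K (vj j), vj j⟫ := by
        rw [hX1]; exact Finset.sum_le_sum fun j _ => hterm j
      have hS2 : (∑ j, Real.sqrt ⟪K (P j v), P j v⟫ * Real.sqrt ⟪K (vj j), vj j⟫) ^ 2 ≤
          (∑ j, ⟪K (P j v), P j v⟫) * (∑ j, ⟪K (vj j), vj j⟫) := by
        have := Finset.sum_mul_sq_le_sq_mul_sq Finset.univ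
          (fun j => Real.sqrt ⟪K (P j v), P j v⟫) (fun j => Real.sqrt ⟪K (vj j), vj j⟫)
        simpa [Real.sq_sqrt (hKnn _)] using this
      have hsum_t : (∑ j, ⟪K (P j v), P j v⟫) = t := (hkey v).symm
      have hXsq : X ^ 2 ≤ t * (C₁ * X) := by
        have hb : (∑ j, ⟪K (P j v), P j v⟫) * (∑ j, ⟪K (vj j), vj j⟫) ≤ t * (C₁ * X) := by
          rw [hsum_t]
          exact mul_le_mul_of_nonneg_left hbound htnn
        have hSnn : 0 ≤ ∑ j, Real.sqrt ⟪K (P j v), P j v⟫ * Real.sqrt ⟪K (vj j), vj j⟫ :=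
          Finset.sum_nonneg fun j _ => mul_nonneg (Real.sqrt_nonneg _) (Real.sqrt_nonneg _)
        calc X ^ 2 ≤ (∑ j, Real.sqrt ⟪K (P j v), P j v⟫ * Real.sqrt ⟪K (vj j), vj j⟫) ^ 2 := by
              apply pow_le_pow_left₀ hXnn hS
          _ ≤ _ := hS2.trans hb
      rw [inv_mul_le_iff₀ hC₁]
      by_cases hX0 : X = 0
      · rw [hX0]; positivity
      · have hXpos : 0 < X := lt_of_le_of_ne hXnn (Ne.symm hX0)
        nlinarith
    · -- upper bound
      have hQQ : ⟪K ((∑ j, P j) v), (∑ j, P j) v⟫ ≤ C₂ * t := by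
        have := hstable ((∑ j, P j) v) (fun j => P j v) (fun j => hPmem j v) (hQ v)
        rw [ht, hkey]
        exact this
      have hcs := K_cauchy_schwarz K hKsym hKnn ((∑ j, P j) v) v
      by_cases ht0 : t = 0
      · rw [ht0]; positivity
      · have htpos : 0 < t := lt_of_le_of_ne htnn (Ne.symm ht0)
        nlinarith
  refine ⟨main, fun lam v hv hev => ?_⟩
  have hXpos : 0 < ⟪K v, v⟫ := hKpos v hv
  have h := main v
  rw [hev, map_smul] at h
  simp only [LinearMap.smul_apply, real_inner_smul_left] at h
  exact ⟨by nlinarith [h.1], by nlinarith [h.2]⟩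
end

section
/- Let V be a finite-dimensional real vector space with symmetric positive definite operator K, subspaces V₀, ..., V_m with K-orthogonal projections P_j defined by (K P_j v, w_j) = (K v, w_j) for all w_j ∈ V_j, and P = Σ_{j=0}^m P_j. Then P is K-symmetric: (K u, P v) = (K P u, v) for all u, v ∈ V; moreover (K P v, P v) ≥ 0 with equality iff Pv = 0, and if V = V₀ + ... + V_m then P is injective (hence positive definite with respect to the K inner product). -/
open scoped BigOperators RealInnerProductSpace

/-- The additive Schwarz operator `P = Σ_j P_j` built from `K`-orthogonal projections onto
subspaces `V_j` is `K`-symmetric, `(K P v, P v) ≥ 0` with equality iff `P v = 0`, and `P`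
is injective whenever the subspaces span `V`. -/
theorem additive_schwarz_operator_properties
    {V : Type} [NormedAddCommGroup V] [InnerProductSpace ℝ V] [FiniteDimensional ℝ V]
    (K : V →ₗ[ℝ] V)
    (hKsym : ∀ u v : V, ⟪K u, v⟫ = ⟪u, K v⟫)
    (hKpos : ∀ v : V, v ≠ 0 → 0 < ⟪K v, v⟫)
    (m : ℕ) (Vsub : Fin (m + 1) → Submodule ℝ V)
    (P : Fin (m + 1) → V →ₗ[ℝ] V)
    (hPmem : ∀ j v, P j v ∈ Vsub j)
    (hPproj : ∀ j v, ∀ w ∈ Vsub j, ⟪K (P j v), w⟫ = ⟪K v, w⟫) :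
    (∀ u v : V, ⟪K u, (∑ j, P j) v⟫ = ⟪K ((∑ j, P j) u), v⟫) ∧
    (∀ v : V, 0 ≤ ⟪K ((∑ j, P j) v), (∑ j, P j) v⟫ ∧
      (⟪K ((∑ j, P j) v), (∑ j, P j) v⟫ = 0 ↔ (∑ j, P j) v = 0)) ∧
    ((⨆ j, Vsub j) = ⊤ → Function.Injective (∑ j, P j)) := by
  -- nonnegativity of the K-quadratic form
  have hnn : ∀ w : V, 0 ≤ ⟪K w, w⟫ := by
    intro w
    by_cases hw : w = 0
    · simp [hw]
    · exact le_of_lt (hKpos w hw)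
  have hzero : ∀ w : V, ⟪K w, w⟫ = 0 → w = 0 := by
    intro w hw
    by_contra h
    exact absurd hw (ne_of_gt (hKpos w h))
  -- key term identity
  have hterm : ∀ (j : Fin (m + 1)) (u v : V),
      ⟪K u, P j v⟫ = ⟪K (P j u), v⟫ := by
    intro j u v
    have h1 : ⟪K (P j u), P j v⟫ = ⟪K u, P j v⟫ := hPproj j u (P j v) (hPmem j v)
    have h2 : ⟪K (P j v), P j u⟫ = ⟪K v, P j u⟫ := hPproj j v (P j u) (hPmem j u)
    calc ⟪K u, P j v⟫ = ⟪K (P j u), P j v⟫ := h1.symm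
      _ = ⟪P j u, K (P j v)⟫ := hKsym _ _
      _ = ⟪K (P j v), P j u⟫ := real_inner_comm _ _
      _ = ⟪K v, P j u⟫ := h2
      _ = ⟪P j u, K v⟫ := real_inner_comm _ _
      _ = ⟪K (P j u), v⟫ := (hKsym _ _).symm
  have hsym : ∀ u v : V, ⟪K u, (∑ j, P j) v⟫ = ⟪K ((∑ j, P j) u), v⟫ := by
    intro u v
    simp only [LinearMap.sum_apply, map_sum, inner_sum, sum_inner]
    exact Finset.sum_congr rfl fun j _ => hterm j u v
  refine ⟨hsym, fun v => ⟨hnn _, ⟨fun h => hzero _ h, fun h => by simp [h]⟩⟩, ?_⟩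
  intro htop
  have heq : (∑ j, ⇑(P j)) = ⇑(∑ j, P j : V →ₗ[ℝ] V) := by
    ext v; simp
  rw [heq, ← LinearMap.ker_eq_bot, Submodule.eq_bot_iff]
  intro v hv'
  have hv : (∑ j, P j) v = 0 := LinearMap.mem_ker.mp hv'
  -- Each P j v = 0
  have hsum : ⟪K ((∑ j, P j) v), v⟫ = 0 := by rw [hv]; simp
  have hsum' : ∑ j, ⟪K (P j v), P j v⟫ = 0 := by
    have : ∑ j, ⟪K (P j v), v⟫ = 0 := by
      simpa only [LinearMap.sum_apply, map_sum, sum_inner] using hsum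
    rw [← this]
    refine Finset.sum_congr rfl fun j _ => ?_
    exact ((hterm j v v).symm.trans (hPproj j v (P j v) (hPmem j v)).symm).symm
  have hPj : ∀ j, P j v = 0 := by
    intro j
    have := Finset.sum_eq_zero_iff_of_nonneg (fun j _ => hnn (P j v)) |>.mp hsum' j
      (Finset.mem_univ j)
    exact hzero _ this
  -- ⟪K v, w⟫ = 0 for all w ∈ Vsub j
  have hker : ∀ j, Vsub j ≤ LinearMap.ker ((innerₗ V) (K v)) := by
    intro j w hw
    have := hPproj j v w hw
    rw [hPj j] at this
    simp only [map_zero, inner_zero_left] at this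
    simpa using this.symm
  have : (⊤ : Submodule ℝ V) ≤ LinearMap.ker ((innerₗ V) (K v)) := by
    rw [← htop]
    exact iSup_le hker
  have hv0 : ⟪K v, v⟫ = 0 := this (Submodule.mem_top)
  exact hzero v hv0
end

section
/- Let V be a finite-dimensional real inner product space with SPD operator K and subspace decomposition V = V₀ + ... + V_m with stability constants C₁, C₂ (as in additive Schwarz theory), P = Σ P_j the additive Schwarz operator, and u the exact solution of (Ku, v) = (f, v). Then the preconditioned conjugate gradient iterates satisfy |u - u^(ℓ)|_K ≤ 2((√κ - 1)/(√κ + 1))^ℓ |u - u^(0)|_K with κ = C₁C₂. -/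
/-!
The additive Schwarz operator `P = ∑ j, P j` is symmetric for the energy inner product
`⟪K x, y⟫`, and the two stability estimates say that its Rayleigh quotient lies in `[C₁⁻¹, C₂]`
(the lower bound by Cauchy–Schwarz applied to `⟪v, v⟫_K = ∑ j, ⟪P j v, v j⟫_K`), hence so does
its spectrum. Conjugate gradients does at least as well as `q(P) e₀` for every `q` of degree `≤ ℓ`
with `q(0) = 1`, and on a spectrum in `[a, b]` the rescaled Chebyshev polynomial
`T_ℓ((b + a - 2x)/(b - a)) / T_ℓ((b + a)/(b - a))` is bounded by `2 ρ^ℓ`,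
`ρ = (√(b/a) - 1)/(√(b/a) + 1)`, because `T_ℓ(cosh θ) = cosh (ℓ θ) ≥ e^{ℓθ}/2`.
-/

open Polynomial
open scoped RealInnerProductSpace

theorem Polynomial.Chebyshev.pow_le_two_mul_eval_T_real (n : ℕ) {s : ℝ} (hs : 0 < s) :
    s ^ n ≤ 2 * (T ℝ n).eval ((s + s⁻¹) / 2) := by
  rw [← Real.cosh_log hs, T_real_cosh, Real.cosh_eq, Int.cast_natCast, Real.exp_nat_mul,
    Real.exp_log hs]
  linarith [Real.exp_pos (-(n * Real.log s))]

noncomputable def cgRate (κ : ℝ) : ℝ := (√κ - 1) / (√κ + 1)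

theorem cgRate_nonneg {κ : ℝ} (hκ : 1 ≤ κ) : 0 ≤ cgRate κ :=
  div_nonneg (sub_nonneg.2 (Real.one_le_sqrt.2 hκ)) (by positivity)

open Polynomial.Chebyshev in
theorem exists_poly_eval_zero_eq_one_abs_le_of_lt {a b : ℝ} (ha : 0 < a) (hab : a < b) (ℓ : ℕ) :
    ∃ q : ℝ[X], q.natDegree ≤ ℓ ∧ q.eval 0 = 1 ∧
      ∀ x ∈ Set.Icc a b, |q.eval x| ≤ 2 * cgRate (b / a) ^ ℓ := by
  set t := √(b / a)
  have ht : 1 < t := Real.lt_sqrt_of_sq_lt (by rw [one_pow]; exact (one_lt_div ha).2 hab)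
  have ht2 : t ^ 2 = b / a := Real.sq_sqrt (div_pos (ha.trans hab) ha).le
  -- `σ`, the image of `0` under the affine map sending `[a, b]` onto `[-1, 1]`, is `cosh (log s)`.
  set s := (t + 1) / (t - 1)
  have hs : 0 < s := div_pos (by linarith) (by linarith)
  set σ := (s + s⁻¹) / 2
  have hσ : σ = (b + a) / (b - a) := by
    have h1 : t - 1 ≠ 0 := by linarith
    have h2 : t ^ 2 - 1 ≠ 0 := by nlinarith
    have h3 : b - a ≠ 0 := sub_ne_zero.2 hab.ne'
    calc σ = (t ^ 2 + 1) / (t ^ 2 - 1) := by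
          simp only [σ, s, inv_div]; field_simp; ring
      _ = (b + a) / (b - a) := by rw [ht2]; field_simp
  have hTσ : s ^ ℓ ≤ 2 * (T ℝ ℓ).eval σ := pow_le_two_mul_eval_T_real ℓ hs
  have hTσ_pos : 0 < (T ℝ ℓ).eval σ := by linarith [pow_pos hs ℓ]
  refine ⟨C ((T ℝ ℓ).eval σ)⁻¹ * (T ℝ ℓ).comp (C (-(2 / (b - a))) * X + C σ), ?_, ?_, ?_⟩
  · refine (natDegree_C_mul_le _ _).trans ?_
    rw [natDegree_comp, natDegree_T, Int.natAbs_natCast]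
    exact (Nat.mul_le_mul_left ℓ natDegree_linear_le).trans_eq (mul_one ℓ)
  · simp [hTσ_pos.ne']
  · intro x hx
    have hy : |-(2 / (b - a)) * x + σ| ≤ 1 := by
      rw [hσ, abs_le]
      have : 0 < b - a := sub_pos.2 hab
      constructor <;> field_simp <;> linarith [hx.1, hx.2]
    simp only [eval_mul, eval_C, eval_comp, eval_add, eval_X, abs_mul,
      abs_of_pos (inv_pos.2 hTσ_pos)]
    calc ((T ℝ ℓ).eval σ)⁻¹ * |(T ℝ ℓ).eval (-(2 / (b - a)) * x + σ)|
        ≤ ((T ℝ ℓ).eval σ)⁻¹ :=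
          mul_le_of_le_one_right (by positivity) (abs_eval_T_real_le_one _ hy)
      _ ≤ (s ^ ℓ / 2)⁻¹ := inv_anti₀ (by positivity) (by linarith)
      _ = 2 * ((t - 1) / (t + 1)) ^ ℓ := by rw [inv_div, div_eq_mul_inv, ← inv_pow, inv_div]

theorem exists_poly_eval_zero_eq_one_abs_le {a b : ℝ} (ha : 0 < a) (hab : a ≤ b) (ℓ : ℕ) :
    ∃ q : ℝ[X], q.natDegree ≤ ℓ ∧ q.eval 0 = 1 ∧
      ∀ x ∈ Set.Icc a b, |q.eval x| ≤ 2 * cgRate (b / a) ^ ℓ := by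
  obtain rfl | hab := hab.eq_or_lt
  · refine ⟨(C (-a⁻¹) * X + C 1) ^ ℓ,
      (natDegree_pow_le_of_le ℓ natDegree_linear_le).trans_eq (mul_one ℓ), by simp, ?_⟩
    intro x hx
    obtain rfl : x = a := le_antisymm hx.2 hx.1
    simpa [cgRate, ha.ne'] using le_mul_of_one_le_left (pow_nonneg le_rfl ℓ) one_le_two
  · exact exists_poly_eval_zero_eq_one_abs_le_of_lt ha hab ℓ

variable {E : Type*} [NormedAddCommGroup E] [InnerProductSpace ℝ E]

theorem Module.End.HasEigenvalue.mem_Icc_of_forall_inner_le {T : E →ₗ[ℝ] E} {μ a b : ℝ}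
    (hμ : Module.End.HasEigenvalue T μ) (hlow : ∀ w, a * ‖w‖ ^ 2 ≤ ⟪T w, w⟫)
    (hup : ∀ w, ⟪T w, w⟫ ≤ b * ‖w‖ ^ 2) : μ ∈ Set.Icc a b := by
  obtain ⟨v, hv⟩ := hμ.exists_hasEigenvector
  have hTv : ⟪T v, v⟫ = μ * ‖v‖ ^ 2 := by
    rw [hv.apply_eq_smul, real_inner_smul_left, real_inner_self_eq_norm_sq]
  have hv0 : 0 < ‖v‖ ^ 2 := by have := hv.2; positivity
  exact ⟨le_of_mul_le_mul_right (hTv ▸ hlow v) hv0, le_of_mul_le_mul_right (hTv ▸ hup v) hv0⟩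

theorem inner_apply_self_le_of_norm_sq_le {T : E →ₗ[ℝ] E} {C : ℝ} (hC : 0 ≤ C) {v : E}
    (h : ‖T v‖ ^ 2 ≤ C * ⟪T v, v⟫) : ⟪T v, v⟫ ≤ C * ‖v‖ ^ 2 := by
  have hcs : ⟪T v, v⟫ ≤ ‖T v‖ * ‖v‖ := real_inner_le_norm _ _
  have hTv : ‖T v‖ ≤ C * ‖v‖ := by
    rcases (norm_nonneg (T v)).eq_or_lt with h0 | hpos
    · rw [← h0]; positivity
    · refine le_of_mul_le_mul_left ?_ hpos
      nlinarith [mul_le_mul_of_nonneg_left hcs hC]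
  nlinarith [mul_le_mul_of_nonneg_right hTv (norm_nonneg v)]

namespace LinearMap.IsSymmetric

variable [FiniteDimensional ℝ E] {T : E →ₗ[ℝ] E} (hT : T.IsSymmetric)

theorem eigenvectorBasis_repr_aeval {n : ℕ} (hn : Module.finrank ℝ E = n) (q : ℝ[X]) (v : E)
    (i : Fin n) :
    (hT.eigenvectorBasis hn).repr (aeval T q v) i =
      q.eval (hT.eigenvalues hn i) * (hT.eigenvectorBasis hn).repr v i := by
  induction q using Polynomial.induction_on' generalizing v with
  | add p r hp hr => simp [hp, hr, add_mul]
  | monomial k c =>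
    induction k generalizing v with
    | zero => simp [Algebra.algebraMap_eq_smul_one]
    | succ k ih =>
      rw [← monomial_mul_X, aeval_mul, Module.End.mul_apply, aeval_X, ih,
        eigenvectorBasis_apply_self_apply, eval_mul, eval_X, RCLike.ofReal_real_eq_id, id_eq]
      ring

theorem norm_aeval_apply_le {n : ℕ} (hn : Module.finrank ℝ E = n) {M : ℝ} (hM : 0 ≤ M)
    {q : ℝ[X]} (hq : ∀ i, |q.eval (hT.eigenvalues hn i)| ≤ M) (v : E) :
    ‖aeval T q v‖ ≤ M * ‖v‖ := by
  set B := hT.eigenvectorBasis hn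
  have hnorm_sq : ∀ x : E, ‖x‖ ^ 2 = ∑ i, (B.repr x i) ^ 2 := fun x => by
    rw [← B.repr.norm_map x, EuclideanSpace.norm_sq_eq]
    simp only [Real.norm_eq_abs, sq_abs]
  refine (pow_le_pow_iff_left₀ (norm_nonneg _) (by positivity) two_ne_zero).1 ?_
  rw [mul_pow, hnorm_sq, hnorm_sq, Finset.mul_sum]
  refine Finset.sum_le_sum fun i _ => ?_
  rw [eigenvectorBasis_repr_aeval, mul_pow]
  exact mul_le_mul_of_nonneg_right (sq_le_sq' (abs_le.1 (hq i)).1 (abs_le.1 (hq i)).2)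
    (sq_nonneg _)

include hT in
theorem norm_le_two_mul_cgRate_pow_mul_norm {a b : ℝ} (ha : 0 < a)
    (hlow : ∀ w, a * ‖w‖ ^ 2 ≤ ⟪T w, w⟫) (hup : ∀ w, ⟪T w, w⟫ ≤ b * ‖w‖ ^ 2) {ℓ : ℕ} {e₀ e : E}
    (hopt : ∀ q : ℝ[X], q.natDegree ≤ ℓ → q.eval 0 = 1 → ‖e‖ ≤ ‖aeval T q e₀‖) :
    ‖e‖ ≤ 2 * cgRate (b / a) ^ ℓ * ‖e₀‖ := by
  rcases eq_or_ne e₀ 0 with rfl | he₀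
  · simpa using hopt 1 (by simp) (by simp)
  have hab : a ≤ b := le_of_mul_le_mul_right ((hlow e₀).trans (hup e₀)) (by positivity)
  obtain ⟨q, hdeg, h0, hq⟩ := exists_poly_eval_zero_eq_one_abs_le ha hab ℓ
  have hρ : 0 ≤ 2 * cgRate (b / a) ^ ℓ :=
    mul_nonneg zero_le_two (pow_nonneg (cgRate_nonneg ((one_le_div ha).2 hab)) ℓ)
  calc ‖e‖ ≤ ‖aeval T q e₀‖ := hopt q hdeg h0
    _ ≤ _ := hT.norm_aeval_apply_le rfl hρ (fun i => hq _
      ((hT.hasEigenvalue_eigenvalues rfl i).mem_Icc_of_forall_inner_le hlow hup)) e₀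

end LinearMap.IsSymmetric

namespace AdditiveSchwarz

variable {ι : Type*} [Fintype ι] {S : ι → Set E} {P : ι → E →ₗ[ℝ] E}
  (hPmem : ∀ j v, P j v ∈ S j) (hPproj : ∀ j v, ∀ w ∈ S j, ⟪P j v, w⟫ = ⟪v, w⟫)
include hPmem hPproj

theorem isSymmetric_sum : (∑ j, P j).IsSymmetric := fun x y => by
  simp only [LinearMap.coe_sum, Finset.sum_apply, sum_inner, inner_sum]
  refine Finset.sum_congr rfl fun j _ => ?_
  calc ⟪P j x, y⟫ = ⟪P j y, P j x⟫ := by rw [real_inner_comm, hPproj j y _ (hPmem j x)]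
    _ = ⟪x, P j y⟫ := by rw [real_inner_comm, hPproj j x _ (hPmem j y)]

theorem inner_sum_apply_self (v : E) : ⟪(∑ j, P j) v, v⟫ = ∑ j, ‖P j v‖ ^ 2 := by
  simp only [LinearMap.coe_sum, Finset.sum_apply, sum_inner]
  refine Finset.sum_congr rfl fun j _ => ?_
  rw [← real_inner_self_eq_norm_sq, hPproj j v _ (hPmem j v), real_inner_comm]

theorem norm_sq_le_mul_inner_sum_apply {C : ℝ} {v : E} (vj : ι → E) (hvj : ∀ j, vj j ∈ S j)
    (hv : v = ∑ j, vj j) (hstab : ∑ j, ‖vj j‖ ^ 2 ≤ C * ‖v‖ ^ 2) :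
    ‖v‖ ^ 2 ≤ C * ⟪(∑ j, P j) v, v⟫ := by
  rcases eq_or_ne v 0 with rfl | hv0
  · simp
  set A := ⟪(∑ j, P j) v, v⟫
  have hA : A = ∑ j, ‖P j v‖ ^ 2 := inner_sum_apply_self hPmem hPproj v
  have hsplit : ‖v‖ ^ 2 ≤ ∑ j, ‖P j v‖ * ‖vj j‖ := calc
    ‖v‖ ^ 2 = ∑ j, ⟪P j v, vj j⟫ := by
      rw [← real_inner_self_eq_norm_sq]
      nth_rw 2 [hv]
      rw [inner_sum]
      exact Finset.sum_congr rfl fun j _ => (hPproj j v _ (hvj j)).symm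
    _ ≤ ∑ j, ‖P j v‖ * ‖vj j‖ := Finset.sum_le_sum fun j _ => real_inner_le_norm _ _
  have hcs := Finset.sum_mul_sq_le_sq_mul_sq Finset.univ (fun j => ‖P j v‖) (fun j => ‖vj j‖)
  rw [← hA] at hcs
  have hA0 : 0 ≤ A := hA ▸ Finset.sum_nonneg fun j _ => sq_nonneg _
  have hsq : (‖v‖ ^ 2) ^ 2 ≤ C * A * ‖v‖ ^ 2 := by
    nlinarith [pow_le_pow_left₀ (sq_nonneg ‖v‖) hsplit 2, mul_le_mul_of_nonneg_left hstab hA0]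
  exact le_of_mul_le_mul_right (by nlinarith) (by positivity : 0 < ‖v‖ ^ 2)

theorem norm_le_two_mul_cgRate_pow_mul_norm [FiniteDimensional ℝ E] {C₁ C₂ : ℝ} (hC₁ : 0 < C₁)
    (hC₂ : 0 ≤ C₂)
    (hdecomp : ∀ v : E, ∃ vj : ι → E,
      (∀ j, vj j ∈ S j) ∧ v = ∑ j, vj j ∧ ∑ j, ⟪vj j, vj j⟫ ≤ C₁ * ⟪v, v⟫)
    (hstable : ∀ (v : E) (vj : ι → E), (∀ j, vj j ∈ S j) → v = ∑ j, vj j →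
      ⟪v, v⟫ ≤ C₂ * ∑ j, ⟪vj j, vj j⟫)
    {ℓ : ℕ} {e₀ e : E}
    (hopt : ∀ q : ℝ[X], q.natDegree ≤ ℓ → q.eval 0 = 1 → ‖e‖ ≤ ‖aeval (∑ j, P j) q e₀‖) :
    ‖e‖ ≤ 2 * cgRate (C₁ * C₂) ^ ℓ * ‖e₀‖ := by
  simp only [real_inner_self_eq_norm_sq] at hdecomp hstable
  have hlow : ∀ w, C₁⁻¹ * ‖w‖ ^ 2 ≤ ⟪(∑ j, P j) w, w⟫ := fun w => by
    obtain ⟨vj, hvj, hw, hstab⟩ := hdecomp w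
    exact (inv_mul_le_iff₀ hC₁).2 (norm_sq_le_mul_inner_sum_apply hPmem hPproj vj hvj hw hstab)
  have hup : ∀ w, ⟪(∑ j, P j) w, w⟫ ≤ C₂ * ‖w‖ ^ 2 := fun w => by
    refine inner_apply_self_le_of_norm_sq_le hC₂ ?_
    rw [inner_sum_apply_self hPmem hPproj]
    exact hstable _ _ (fun j => hPmem j w) (LinearMap.sum_apply _ _ _)
  have h := (isSymmetric_sum hPmem hPproj).norm_le_two_mul_cgRate_pow_mul_norm
    (inv_pos.2 hC₁) hlow hup hopt
  rwa [div_inv_eq_mul, mul_comm C₂] at h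

end AdditiveSchwarz

noncomputable abbrev energyCore {V : Type*} [NormedAddCommGroup V] [InnerProductSpace ℝ V]
    (K : V →ₗ[ℝ] V) (hKsym : ∀ u v : V, ⟪K u, v⟫ = ⟪u, K v⟫)
    (hKpos : ∀ v : V, v ≠ 0 → 0 < ⟪K v, v⟫) : InnerProductSpace.Core ℝ V where
  inner x y := ⟪K x, y⟫
  conj_inner_symm x y := by simp [hKsym y, real_inner_comm]
  re_inner_nonneg x := by
    rcases eq_or_ne x 0 with rfl | hx
    · simp
    · exact (hKpos x hx).le
  definite x hx := by_contra fun hne => (hKpos x hne).ne' hx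
  add_left x y z := by simp [inner_add_left]
  smul_left x y r := by simp [real_inner_smul_left]

/-- A copy of `V` on which `energyCore` can be installed without clashing with the inner product
of `V`. -/
def EnergySpace (V : Type*) : Type _ := V

instance {V : Type*} [AddCommGroup V] : AddCommGroup (EnergySpace V) :=
  inferInstanceAs (AddCommGroup V)

instance {V : Type*} [AddCommGroup V] [Module ℝ V] : Module ℝ (EnergySpace V) :=
  inferInstanceAs (Module ℝ V)

theorem additive_schwarz_pcg_convergence_general
    {V : Type} [NormedAddCommGroup V] [InnerProductSpace ℝ V] [FiniteDimensional ℝ V]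
    (K : V →ₗ[ℝ] V)
    (hKsym : ∀ u v : V, ⟪K u, v⟫ = ⟪u, K v⟫)
    (hKpos : ∀ v : V, v ≠ 0 → 0 < ⟪K v, v⟫)
    (m : ℕ) (Vsub : Fin (m + 1) → Submodule ℝ V)
    (P : Fin (m + 1) → V →ₗ[ℝ] V)
    (hPmem : ∀ j v, P j v ∈ Vsub j)
    (hPproj : ∀ j v, ∀ w ∈ Vsub j, ⟪K (P j v), w⟫ = ⟪K v, w⟫)
    (C₁ C₂ : ℝ) (hC₁ : 0 < C₁) (hC₂ : 0 < C₂)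
    (hdecomp : ∀ v : V, ∃ vj : Fin (m + 1) → V,
      (∀ j, vj j ∈ Vsub j) ∧ v = ∑ j, vj j ∧
      (∑ j, ⟪K (vj j), vj j⟫) ≤ C₁ * ⟪K v, v⟫)
    (hstable : ∀ (v : V) (vj : Fin (m + 1) → V),
      (∀ j, vj j ∈ Vsub j) → v = ∑ j, vj j →
      ⟪K v, v⟫ ≤ C₂ * ∑ j, ⟪K (vj j), vj j⟫)
    (u : V)
    (useq : ℕ → V)
    (hCG : ∀ (ℓ : ℕ) (q : Polynomial ℝ), q.natDegree ≤ ℓ → q.eval 0 = 1 →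
      Real.sqrt ⟪K (u - useq ℓ), u - useq ℓ⟫ ≤
        Real.sqrt ⟪K ((Polynomial.aeval (∑ j, P j : Module.End ℝ V) q) (u - useq 0)),
          (Polynomial.aeval (∑ j, P j : Module.End ℝ V) q) (u - useq 0)⟫) :
    ∀ ℓ : ℕ,
      Real.sqrt ⟪K (u - useq ℓ), u - useq ℓ⟫ ≤
        2 * ((Real.sqrt (C₁ * C₂) - 1) / (Real.sqrt (C₁ * C₂) + 1)) ^ ℓ *
          Real.sqrt ⟪K (u - useq 0), u - useq 0⟫ := by
  intro ℓ
  let core : InnerProductSpace.Core ℝ (EnergySpace V) := energyCore (V := V) K hKsym hKpos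
  let : NormedAddCommGroup (EnergySpace V) := core.toNormedAddCommGroup
  let : InnerProductSpace ℝ (EnergySpace V) := InnerProductSpace.ofCore core.toCore
  have : FiniteDimensional ℝ (EnergySpace V) := inferInstanceAs (FiniteDimensional ℝ V)
  exact AdditiveSchwarz.norm_le_two_mul_cgRate_pow_mul_norm (E := EnergySpace V)
    (S := fun j => (Vsub j : Set V)) hPmem hPproj hC₁ hC₂.le hdecomp hstable (hCG ℓ)

/-- Full additive Schwarz PCG convergence: given a subspace decomposition with stability
constants `C₁, C₂`, the additive Schwarz operator `P = Σ P_j`, the exact solution `u` of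
`(Ku, v) = (f, v)`, and the preconditioned conjugate gradient iterates (characterized by
`K`-norm optimality of the error over Krylov polynomial spaces), it holds that
`|u - u^(ℓ)|_K ≤ 2 ((√κ - 1)/(√κ + 1))^ℓ |u - u^(0)|_K` with `κ = C₁ C₂`. -/
theorem additive_schwarz_pcg_convergence
    {V : Type} [NormedAddCommGroup V] [InnerProductSpace ℝ V] [FiniteDimensional ℝ V]
    (K : V →ₗ[ℝ] V)
    (hKsym : ∀ u v : V, ⟪K u, v⟫ = ⟪u, K v⟫)
    (hKpos : ∀ v : V, v ≠ 0 → 0 < ⟪K v, v⟫)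
    (m : ℕ) (Vsub : Fin (m + 1) → Submodule ℝ V)
    (P : Fin (m + 1) → V →ₗ[ℝ] V)
    (hPmem : ∀ j v, P j v ∈ Vsub j)
    (hPproj : ∀ j v, ∀ w ∈ Vsub j, ⟪K (P j v), w⟫ = ⟪K v, w⟫)
    (C₁ C₂ : ℝ) (hC₁ : 0 < C₁) (hC₂ : 0 < C₂)
    (hdecomp : ∀ v : V, ∃ vj : Fin (m + 1) → V,
      (∀ j, vj j ∈ Vsub j) ∧ v = ∑ j, vj j ∧
      (∑ j, ⟪K (vj j), vj j⟫) ≤ C₁ * ⟪K v, v⟫)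
    (hstable : ∀ (v : V) (vj : Fin (m + 1) → V),
      (∀ j, vj j ∈ Vsub j) → v = ∑ j, vj j →
      ⟪K v, v⟫ ≤ C₂ * ∑ j, ⟪K (vj j), vj j⟫)
    (f u : V)
    (hu : ∀ v : V, ⟪K u, v⟫ = ⟪f, v⟫)
    (useq : ℕ → V)
    (hCG : ∀ (ℓ : ℕ) (q : Polynomial ℝ), q.natDegree ≤ ℓ → q.eval 0 = 1 →
      Real.sqrt ⟪K (u - useq ℓ), u - useq ℓ⟫ ≤
        Real.sqrt ⟪K ((Polynomial.aeval (∑ j, P j : Module.End ℝ V) q) (u - useq 0)),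
          (Polynomial.aeval (∑ j, P j : Module.End ℝ V) q) (u - useq 0)⟫) :
    ∀ ℓ : ℕ,
      Real.sqrt ⟪K (u - useq ℓ), u - useq ℓ⟫ ≤
        2 * ((Real.sqrt (C₁ * C₂) - 1) / (Real.sqrt (C₁ * C₂) + 1)) ^ ℓ *
          Real.sqrt ⟪K (u - useq 0), u - useq 0⟫ :=
  additive_schwarz_pcg_convergence_general K hKsym hKpos m Vsub P hPmem hPproj C₁ C₂ hC₁ hC₂ hdecomp
    hstable u useq hCG
end

section
/- Suppose a finite connected graph Ḡ with node set N̄ satisfies the d-dimensional isoperimetric inequality (vol X)^{(d-1)/d} ≤ ν₂ |Ē(X, N̄∖X)| for all X ⊆ N̄ with vol X ≤ vol(N̄∖X), has total volume vol(N̄) ≤ ν₁ (R/R₀)^d, and all edge lengths at most R₀. Then the second-smallest generalized eigenvalue λ₂ of the length-weighted problem L̄u = λM̄u satisfies λ₂^{-1/2} ≤ C(ν₁, ν₂) R, where C depends only on ν₁ and ν₂ (and d); i.e. the Poincaré constant μ = R⁻¹λ₂^{-1/2} is bounded independently of R. -/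
open scoped BigOperators

/-- Mass quadratic form `(M̄v, v) = Σ_x (1/2) Σ_{y∼x} |x-y| v(x)²`. -/
noncomputable def Mform {ι : Type} [Fintype ι] (adj : ι → ι → Prop) [DecidableRel adj]
    (len : ι → ι → ℝ) (v : ι → ℝ) : ℝ :=
  ∑ x, (1/2) * ∑ y, if adj x y then len x y * v x ^ 2 else 0

/-- Laplacian quadratic form `(L̄v, v) = Σ_x (1/2) Σ_{y∼x} (v(x)-v(y))²/|x-y|`. -/
noncomputable def Lform {ι : Type} [Fintype ι] (adj : ι → ι → Prop) [DecidableRel adj]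
    (len : ι → ι → ℝ) (v : ι → ℝ) : ℝ :=
  ∑ x, (1/2) * ∑ y, if adj x y then (v x - v y) ^ 2 / len x y else 0

/-- Node degree. -/
noncomputable def deg {ι : Type} [Fintype ι] (adj : ι → ι → Prop) [DecidableRel adj]
    (x : ι) : ℕ :=
  (Finset.univ.filter fun y => adj x y).card

/-- Volume of a node subset: sum of degrees. -/
noncomputable def vol {ι : Type} [Fintype ι] (adj : ι → ι → Prop) [DecidableRel adj]
    (X : Finset ι) : ℕ :=
  ∑ x ∈ X, deg adj x

/-- The set of (ordered) edges from `X` to its complement. -/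
noncomputable def edgeCut {ι : Type} [Fintype ι] [DecidableEq ι]
    (adj : ι → ι → Prop) [DecidableRel adj] (X : Finset ι) : Finset (ι × ι) :=
  Finset.univ.filter fun p => p.1 ∈ X ∧ p.2 ∉ X ∧ adj p.1 p.2

/-- The second-smallest generalized eigenvalue of `L̄u = λM̄u`, characterized as the
infimum of the Rayleigh quotient over nonzero `v` that are `M̄`-orthogonal to constants. -/
noncomputable def lam2 {ι : Type} [Fintype ι] (adj : ι → ι → Prop) [DecidableRel adj]
    (len : ι → ι → ℝ) : ℝ :=
  sInf {t : ℝ | ∃ v : ι → ℝ, v ≠ 0 ∧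
    (∑ x, ((1/2) * ∑ y, if adj x y then len x y else 0) * v x) = 0 ∧
    t = Lform adj len v / Mform adj len v}

/-!
The isoperimetric inequality and `vol X ≤ vol N̄` make `h = (ν₂ vol(N̄)^{1/d})⁻¹` a lower bound
for the Cheeger ratio `|Ē(X, N̄∖X)| / vol X` of every `X` holding at most half of the volume.
A discrete co-area argument and Cauchy–Schwarz turn this into
`h² Σ_x d̄_x f(x)² ≤ Σ_{x∼y} (f(x) - f(y))²` for nonnegative `f` supported on such sets; splitting
at a median `c` extends it to `v - c` for every `v`, and `M̄`-orthogonality to constants lets `c`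
be subtracted for free on the mass side. Edge lengths at most `R₀` give
`(M̄v, v) ≤ (R₀/2) Σ_x d̄_x v(x)²` and `Σ_{x∼y} (v(x) - v(y))² ≤ 2R₀ (L̄v, v)`, hence
`λ₂ ≥ h²/R₀²`, and the volume bound gives `λ₂^{-1/2} ≤ R₀ ν₂ vol(N̄)^{1/d} ≤ ν₂ ν₁^{1/d} R`.
-/

open Finset

section AdjacencySums

variable {ι : Type} [Fintype ι] {adj : ι → ι → Prop} [DecidableRel adj]

variable (adj) in
noncomputable def adjSum (F : ι → ι → ℝ) : ℝ :=
  ∑ x, ∑ y, if adj x y then F x y else 0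

lemma sum_ite_adj_const (x : ι) (c : ℝ) :
    (∑ y, if adj x y then c else 0) = (deg adj x : ℝ) * c := by
  rw [← sum_filter, sum_const, deg, nsmul_eq_mul]

lemma adjSum_const_right (f : ι → ℝ) :
    adjSum adj (fun x _ => f x) = ∑ x, (deg adj x : ℝ) * f x :=
  sum_congr rfl fun x _ => sum_ite_adj_const x (f x)

lemma adjSum_add (F G : ι → ι → ℝ) :
    adjSum adj (fun x y => F x y + G x y) = adjSum adj F + adjSum adj G := by
  simp only [adjSum, ← sum_add_distrib, ite_add_ite, add_zero]

lemma mul_adjSum (c : ℝ) (F : ι → ι → ℝ) :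
    c * adjSum adj F = adjSum adj fun x y => c * F x y := by
  simp only [adjSum, mul_sum, mul_ite, mul_zero]

lemma adjSum_mono {F G : ι → ι → ℝ} (hFG : ∀ x y, adj x y → F x y ≤ G x y) :
    adjSum adj F ≤ adjSum adj G :=
  sum_le_sum fun x _ => sum_le_sum fun y _ => by
    split_ifs with hxy
    exacts [hFG x y hxy, le_rfl]

lemma adjSum_nonneg {F : ι → ι → ℝ} (hF : ∀ x y, adj x y → 0 ≤ F x y) : 0 ≤ adjSum adj F := by
  simpa [adjSum] using adjSum_mono (adj := adj) (F := 0) hF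

lemma adjSum_swap (hsymm : ∀ x y, adj x y → adj y x) (F : ι → ι → ℝ) :
    adjSum adj (fun x y => F y x) = adjSum adj F := by
  rw [adjSum, sum_comm]
  exact sum_congr rfl fun y _ => sum_congr rfl fun x _ =>
    if_congr ⟨hsymm x y, hsymm y x⟩ rfl rfl

lemma sq_adjSum_mul_le (F G : ι → ι → ℝ) :
    (adjSum adj fun x y => F x y * G x y) ^ 2 ≤
      (adjSum adj fun x y => F x y ^ 2) * adjSum adj fun x y => G x y ^ 2 := by
  have hedges (H : ι → ι → ℝ) :
      adjSum adj H = ∑ p ∈ univ.filter fun p : ι × ι => adj p.1 p.2, H p.1 p.2 := by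
    rw [sum_filter, ← univ_product_univ, sum_product]
    rfl
  simpa only [hedges] using sum_mul_sq_le_sq_mul_sq _ _ _

lemma edgeCut_card_eq_adjSum [DecidableEq ι] (X : Finset ι) :
    ((edgeCut adj X).card : ℝ) = adjSum adj fun x y => if x ∈ X ∧ y ∉ X then 1 else 0 := by
  rw [edgeCut, card_filter, Nat.cast_sum, Fintype.sum_prod_type]
  refine sum_congr rfl fun x _ => sum_congr rfl fun y _ => ?_
  by_cases hxy : adj x y <;> simp [hxy]

variable (adj) in
lemma vol_mono {X Y : Finset ι} (hXY : X ⊆ Y) : vol adj X ≤ vol adj Y :=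
  sum_le_sum_of_subset hXY

variable (adj) in
lemma vol_add_vol_compl [DecidableEq ι] (X : Finset ι) :
    vol adj X + vol adj (univ \ X) = vol adj univ := by
  rw [vol, vol, add_comm, sum_sdiff (subset_univ X), vol]

end AdjacencySums

lemma max_sub_zero_add_min (a m : ℝ) : max (a - m) 0 + min a m = a := by
  rcases le_total a m with h | h <;> simp [h]

lemma abs_sub_eq_abs_sub_max_add_abs_sub_min (a b m : ℝ) :
    |a - b| = |max (a - m) 0 - max (b - m) 0| + |min a m - min b m| := by
  have hsplit : a - b = (max (a - m) 0 - max (b - m) 0) + (min a m - min b m) := by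
    linarith [max_sub_zero_add_min a m, max_sub_zero_add_min b m]
  rw [hsplit, abs_add_eq_add_abs_iff]
  rcases le_total a b with h | h
  · exact Or.inr ⟨sub_nonpos.2 (by gcongr), sub_nonpos.2 (by gcongr)⟩
  · exact Or.inl ⟨sub_nonneg.2 (by gcongr), sub_nonneg.2 (by gcongr)⟩

lemma sq_posPart_add_sq_negPart (a : ℝ) : a⁺ ^ 2 + a⁻ ^ 2 = a ^ 2 := by
  rcases le_total a 0 with ha | ha <;> simp [ha]

lemma sq_posPart_sub_add_sq_negPart_sub_le (a b : ℝ) :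
    (a⁺ - b⁺) ^ 2 + (a⁻ - b⁻) ^ 2 ≤ (a - b) ^ 2 := by
  rcases le_total a 0 with ha | ha <;> rcases le_total b 0 with hb | hb <;>
    simp [ha, hb] <;> nlinarith

lemma sum_mul_sq_le_sum_mul_sub_sq {α : Type*} [Fintype α] {w v : α → ℝ} (hw : 0 ≤ w)
    (horth : ∑ x, w x * v x = 0) (c : ℝ) :
    ∑ x, w x * v x ^ 2 ≤ ∑ x, w x * (v x - c) ^ 2 := by
  have hexpand : ∑ x, w x * (v x - c) ^ 2 =
      ∑ x, w x * v x ^ 2 - 2 * c * ∑ x, w x * v x + c ^ 2 * ∑ x, w x := by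
    simp only [mul_sum, ← sum_sub_distrib, ← sum_add_distrib]
    exact sum_congr rfl fun x _ => by ring
  rw [hexpand, horth]
  nlinarith [sum_nonneg fun x (_ : x ∈ univ) => hw x, sq_nonneg c]

lemma exists_ne_zero_sum_mul_eq_zero {α : Type*} [Fintype α] [DecidableEq α] {w : α → ℝ}
    {a b : α} (hab : a ≠ b) (hwb : w b ≠ 0) :
    ∃ v : α → ℝ, v ≠ 0 ∧ ∑ x, w x * v x = 0 := by
  refine ⟨Pi.single a (w b) - Pi.single b (w a), fun h => hwb ?_, ?_⟩
  · simpa [hab] using congrFun h a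
  · simp [mul_sub, sum_sub_distrib, Pi.single_apply, mul_comm]

lemma rpow_inv_natCast_le_of_le_mul_pow {V ν r : ℝ} {d : ℕ} (hd : d ≠ 0) (hV : 0 ≤ V)
    (hν : 0 ≤ ν) (hr : 0 ≤ r) (h : V ≤ ν * r ^ d) :
    V ^ (d : ℝ)⁻¹ ≤ ν ^ (d : ℝ)⁻¹ * r :=
  calc V ^ (d : ℝ)⁻¹ ≤ (ν * r ^ d) ^ (d : ℝ)⁻¹ := by gcongr
    _ = ν ^ (d : ℝ)⁻¹ * r := by
      rw [Real.mul_rpow hν (by positivity), Real.pow_rpow_inv_natCast hr hd]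

section Cheeger

variable {ι : Type} [Fintype ι] [DecidableEq ι] {adj : ι → ι → Prop} [DecidableRel adj]

variable (adj) in
def CheegerBound (h : ℝ) : Prop :=
  ∀ X : Finset ι, 2 * vol adj X ≤ vol adj univ → h * vol adj X ≤ (edgeCut adj X).card

lemma cheegerBound_of_isoperimetric {d : ℕ} (hd : d ≠ 0) {ν : ℝ} (hν : 0 < ν)
    (hV : 0 < vol adj univ)
    (hiso : ∀ X : Finset ι, vol adj X ≤ vol adj (univ \ X) →
      (vol adj X : ℝ) ^ (((d : ℝ) - 1) / d) ≤ ν * (edgeCut adj X).card) :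
    CheegerBound adj (ν * (vol adj univ : ℝ) ^ (d : ℝ)⁻¹)⁻¹ := by
  intro X hX
  have hXc : vol adj X ≤ vol adj (univ \ X) := by
    have := vol_add_vol_compl adj X
    omega
  rcases (vol adj X).eq_zero_or_pos with h0 | hpos
  · simp [h0]
  have hpos' : (0 : ℝ) < vol adj X := by exact_mod_cast hpos
  have hexp : ((d : ℝ) - 1) / d + (d : ℝ)⁻¹ = 1 := by field_simp; ring
  rw [inv_mul_le_iff₀ (by positivity)]
  calc (vol adj X : ℝ) = (vol adj X : ℝ) ^ (((d : ℝ) - 1) / d) * (vol adj X : ℝ) ^ (d : ℝ)⁻¹ := by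
        rw [← Real.rpow_add hpos', hexp, Real.rpow_one]
    _ ≤ ν * (edgeCut adj X).card * (vol adj univ : ℝ) ^ (d : ℝ)⁻¹ := by
        gcongr
        · exact hiso X hXc
        · exact_mod_cast vol_mono adj (subset_univ X)
    _ = _ := by ring

lemma cheegerBound_indicator (hsymm : ∀ x y, adj x y → adj y x) {h m : ℝ} (hm : 0 ≤ m)
    (hcut : CheegerBound adj h) {S : Finset ι} (hS : 2 * vol adj S ≤ vol adj univ) :
    2 * h * ∑ x, (deg adj x : ℝ) * (if x ∈ S then m else 0) ≤
      adjSum adj fun x y => |(if x ∈ S then m else 0) - (if y ∈ S then m else 0)| := by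
  have hdeg : ∑ x, (deg adj x : ℝ) * (if x ∈ S then m else 0) = m * vol adj S := by
    simp only [mul_ite, mul_zero, ← sum_filter, filter_mem_eq_inter, univ_inter, vol,
      Nat.cast_sum, sum_mul, mul_comm m]
  have hcross (x y : ι) : |(if x ∈ S then m else 0) - (if y ∈ S then m else 0)| =
      m * ((if x ∈ S ∧ y ∉ S then 1 else 0) + (if y ∈ S ∧ x ∉ S then 1 else 0)) := by
    by_cases hx : x ∈ S <;> by_cases hy : y ∈ S <;> simp [hx, hy, abs_of_nonneg hm]
  have hvar : (adjSum adj fun x y => |(if x ∈ S then m else 0) - (if y ∈ S then m else 0)|) =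
      2 * m * (edgeCut adj S).card := by
    simp only [hcross, ← mul_adjSum, adjSum_add,
      adjSum_swap hsymm fun x y => if x ∈ S ∧ y ∉ S then (1 : ℝ) else 0,
      ← edgeCut_card_eq_adjSum]
    ring
  rw [hdeg, hvar]
  nlinarith [hcut S hS]

/-- The discrete co-area inequality: peel off the lowest positive level `m` of `g`, which splits
`g` into `max (g - m) 0` (with a smaller support) and `m` times the indicator of its support. -/
theorem two_mul_sum_deg_mul_le_adjSum_abs (hsymm : ∀ x y, adj x y → adj y x) {h : ℝ}
    (hcut : CheegerBound adj h) (g : ι → ℝ) (hg : 0 ≤ g)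
    (hsupp : 2 * vol adj (univ.filter (g · ≠ 0)) ≤ vol adj univ) :
    2 * h * ∑ x, (deg adj x : ℝ) * g x ≤ adjSum adj fun x y => |g x - g y| := by
  induction hn : (univ.filter (g · ≠ 0)).card using Nat.strong_induction_on generalizing g with
  | _ n ih =>
  set S := univ.filter (g · ≠ 0) with hSdef
  rcases S.eq_empty_or_nonempty with hS | hS
  · have hg0 (x : ι) : g x = 0 := by
      by_contra hx
      exact (eq_empty_iff_forall_notMem.1 hS) x (by simp [hSdef, hx])
    simp [hg0, adjSum]
  obtain ⟨x₀, hx₀, hmin⟩ := S.exists_min_image g hS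
  set m := g x₀
  have hm : 0 < m := lt_of_le_of_ne (hg x₀) (mem_filter.1 hx₀).2.symm
  have hlow (x : ι) : min (g x) m = if x ∈ S then m else 0 := by
    by_cases hx : g x = 0
    · simp [hSdef, hx, hm.le]
    · simp [hSdef, hx, hmin x (by simp [hSdef, hx])]
  set g' : ι → ℝ := fun x => max (g x - m) 0
  have hsub : univ.filter (g' · ≠ 0) ⊂ S := by
    refine Finset.ssubset_of_subset_of_ssubset (fun x hx => ?_) (erase_ssubset hx₀)
    have hx : m < g x := by simpa [g'] using hx
    refine mem_erase.2 ⟨fun h => by simp [h, m] at hx, ?_⟩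
    simp only [hSdef, ne_eq, mem_filter, mem_univ, true_and]
    linarith
  have hIH := ih _ (hn ▸ card_lt_card hsub) g' (fun x => le_max_right _ _)
    (le_trans (by have := vol_mono adj hsub.subset; omega) hsupp) rfl
  have hind := cheegerBound_indicator hsymm hm.le hcut hsupp
  calc 2 * h * ∑ x, (deg adj x : ℝ) * g x
      = 2 * h * ∑ x, (deg adj x : ℝ) * g' x +
          2 * h * ∑ x, (deg adj x : ℝ) * (if x ∈ S then m else 0) := by
        simp only [← mul_add, ← sum_add_distrib, ← hlow, g', max_sub_zero_add_min]
    _ ≤ (adjSum adj fun x y => |g' x - g' y|) +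
          adjSum adj fun x y => |(if x ∈ S then m else 0) - (if y ∈ S then m else 0)| :=
        add_le_add hIH hind
    _ = adjSum adj fun x y => |g x - g y| := by
        simp only [← adjSum_add, ← hlow, g', ← abs_sub_eq_abs_sub_max_add_abs_sub_min]

/-- The Cheeger inequality for functions: the co-area inequality applied to `f ^ 2`, followed by
Cauchy–Schwarz on `|f x ^ 2 - f y ^ 2| = |f x - f y| (f x + f y)`. -/
theorem sq_mul_sum_deg_mul_sq_le_adjSum (hsymm : ∀ x y, adj x y → adj y x) {h : ℝ}
    (hh : 0 ≤ h) (hcut : CheegerBound adj h) (f : ι → ℝ) (hf : 0 ≤ f)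
    (hsupp : 2 * vol adj (univ.filter (f · ≠ 0)) ≤ vol adj univ) :
    h ^ 2 * ∑ x, (deg adj x : ℝ) * f x ^ 2 ≤ adjSum adj fun x y => (f x - f y) ^ 2 := by
  set D := ∑ x, (deg adj x : ℝ) * f x ^ 2
  set Q := adjSum adj fun x y => (f x - f y) ^ 2
  have hcoarea : 2 * h * D ≤ adjSum adj fun x y => |f x - f y| * (f x + f y) := by
    have hsupp2 : univ.filter (fun x => f x ^ 2 ≠ 0) = univ.filter (f · ≠ 0) := by simp
    convert two_mul_sum_deg_mul_le_adjSum_abs hsymm hcut (fun x => f x ^ 2)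
      (fun x => sq_nonneg (f x)) (hsupp2 ▸ hsupp) using 4 with x y
    rw [sq_sub_sq, abs_mul, abs_of_nonneg (add_nonneg (hf x) (hf y)), mul_comm]
  have hsum : (adjSum adj fun x y => (f x + f y) ^ 2) ≤ 4 * D :=
    calc (adjSum adj fun x y => (f x + f y) ^ 2)
        ≤ adjSum adj fun x y => 2 * f x ^ 2 + 2 * f y ^ 2 :=
          adjSum_mono fun x y _ => by nlinarith [sq_nonneg (f x - f y)]
      _ = 4 * D := by
          rw [adjSum_add, adjSum_swap hsymm fun x _ => 2 * f x ^ 2, adjSum_const_right]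
          simp only [D, mul_sum, ← sum_add_distrib]
          exact sum_congr rfl fun x _ => by ring
  have hCS := sq_adjSum_mul_le (adj := adj) (fun x y => |f x - f y|) fun x y => f x + f y
  simp only [sq_abs] at hCS
  have hQ : 0 ≤ Q := adjSum_nonneg fun x y _ => sq_nonneg _
  have hD : 0 ≤ D := sum_nonneg fun x _ => by positivity
  have hsq : (2 * h * D) ^ 2 ≤ Q * (4 * D) :=
    (pow_le_pow_left₀ (by positivity) hcoarea 2).trans
      (hCS.trans (mul_le_mul_of_nonneg_left hsum hQ))
  rcases hD.eq_or_lt with hD0 | hDpos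
  · simp [← hD0, hQ]
  · exact le_of_mul_le_mul_left (by nlinarith : 4 * D * (h ^ 2 * D) ≤ 4 * D * Q) (by positivity)

end Cheeger

section Rayleigh

variable {ι : Type} [Fintype ι] {adj : ι → ι → Prop} [DecidableRel adj]

variable (adj) in
theorem exists_median [DecidableEq ι] (v : ι → ℝ) :
    ∃ c : ℝ, 2 * vol adj (univ.filter (c < v ·)) ≤ vol adj univ ∧
      2 * vol adj (univ.filter (v · < c)) ≤ vol adj univ := by
  rcases isEmpty_or_nonempty ι with hι | hι
  · exact ⟨0, by simp [vol]⟩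
  set T := univ.filter fun x => vol adj univ ≤ 2 * vol adj (univ.filter (v · ≤ v x))
  obtain ⟨xmax, -, hxmax⟩ := univ.exists_max_image v univ_nonempty
  have hT : T.Nonempty := ⟨xmax, by
    simp only [mem_filter, mem_univ, hxmax, filter_true, true_and, T]
    omega⟩
  obtain ⟨x₀, hx₀T, hx₀min⟩ := T.exists_min_image v hT
  refine ⟨v x₀, ?_, ?_⟩
  · have hcompl : univ.filter (v x₀ < v ·) = univ \ univ.filter (v · ≤ v x₀) := by ext; simp
    have := vol_add_vol_compl adj (univ.filter (v · ≤ v x₀))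
    have := (mem_filter.1 hx₀T).2
    rw [hcompl]
    omega
  · set W := univ.filter (v · < v x₀)
    rcases W.eq_empty_or_nonempty with hW | hW
    · simp [hW, vol]
    obtain ⟨x₁, hx₁W, hx₁max⟩ := W.exists_max_image v hW
    have hx₁ : v x₁ < v x₀ := (mem_filter.1 hx₁W).2
    have hWeq : W = univ.filter (v · ≤ v x₁) := by
      ext x
      simp only [W, mem_filter, mem_univ, true_and]
      exact ⟨fun hx => hx₁max x (by simpa [W] using hx), fun hx => hx.trans_lt hx₁⟩
    have hx₁T : x₁ ∉ T := fun h => (hx₀min x₁ h).not_gt hx₁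
    simp only [T, mem_filter, mem_univ, true_and, not_le] at hx₁T
    rw [hWeq]
    omega

variable (adj) in
/-- The diagonal of the mass operator `M̄`. -/
noncomputable def massWeight (len : ι → ι → ℝ) (x : ι) : ℝ :=
  (1 / 2) * ∑ y, if adj x y then len x y else 0

variable {len : ι → ι → ℝ} {R₀ : ℝ}

lemma Mform_eq_sum_massWeight_mul_sq (v : ι → ℝ) :
    Mform adj len v = ∑ x, massWeight adj len x * v x ^ 2 := by
  simp only [Mform, massWeight, mul_assoc, sum_mul, ite_mul, zero_mul]

lemma massWeight_nonneg (hlen : ∀ x y, adj x y → 0 ≤ len x y) (x : ι) :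
    0 ≤ massWeight adj len x :=
  mul_nonneg one_half_pos.le <| sum_nonneg fun y _ => by
    split_ifs with hxy
    exacts [hlen x y hxy, le_rfl]

lemma massWeight_pos (hlen : ∀ x y, adj x y → 0 < len x y) {x : ι} (hx : ∃ z, adj x z) :
    0 < massWeight adj len x := by
  obtain ⟨z, hxz⟩ := hx
  refine mul_pos one_half_pos <|
    sum_pos' (fun y _ => ?_) ⟨z, mem_univ z, by simp [hxz, hlen x z hxz]⟩
  split_ifs with hxy
  exacts [(hlen x y hxy).le, le_rfl]

lemma massWeight_le (hlen : ∀ x y, adj x y → len x y ≤ R₀) (x : ι) :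
    massWeight adj len x ≤ R₀ / 2 * deg adj x := by
  have : (∑ y, if adj x y then len x y else 0) ≤ ∑ y, if adj x y then R₀ else 0 :=
    sum_le_sum fun y _ => by split_ifs with hxy; exacts [hlen x y hxy, le_rfl]
  rw [sum_ite_adj_const] at this
  rw [massWeight]
  linarith

lemma adjSum_sq_sub_le_Lform (hlen : ∀ x y, adj x y → 0 < len x y ∧ len x y ≤ R₀) (v : ι → ℝ) :
    (adjSum adj fun x y => (v x - v y) ^ 2) ≤ 2 * R₀ * Lform adj len v := by
  have hL : 2 * R₀ * Lform adj len v = adjSum adj fun x y => R₀ * ((v x - v y) ^ 2 / len x y) := by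
    rw [← mul_adjSum, Lform, adjSum, ← mul_sum]
    ring
  rw [hL]
  refine adjSum_mono fun x y hxy => ?_
  obtain ⟨hpos, hle⟩ := hlen x y hxy
  calc (v x - v y) ^ 2 = len x y * ((v x - v y) ^ 2 / len x y) := by field_simp
    _ ≤ R₀ * ((v x - v y) ^ 2 / len x y) := by gcongr

/-- Split `v - c` at a median `c` into positive and negative parts, each supported on at most half
of the volume. -/
theorem exists_sq_mul_sum_deg_mul_sq_sub_le_adjSum [DecidableEq ι]
    (hsymm : ∀ x y, adj x y → adj y x) {h : ℝ} (hh : 0 ≤ h) (hcut : CheegerBound adj h)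
    (v : ι → ℝ) :
    ∃ c : ℝ, h ^ 2 * ∑ x, (deg adj x : ℝ) * (v x - c) ^ 2 ≤
      adjSum adj fun x y => (v x - v y) ^ 2 := by
  obtain ⟨c, hcpos, hcneg⟩ := exists_median adj v
  set u : ι → ℝ := fun x => v x - c
  have hsupp_pos : 2 * vol adj (univ.filter fun x => (u x)⁺ ≠ 0) ≤ vol adj univ :=
    le_trans (by gcongr 1; exact vol_mono adj fun x hx => by simpa [u, posPart_eq_zero] using hx)
      hcpos
  have hsupp_neg : 2 * vol adj (univ.filter fun x => (u x)⁻ ≠ 0) ≤ vol adj univ :=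
    le_trans (by gcongr 1; exact vol_mono adj fun x hx => by simpa [u, negPart_eq_zero] using hx)
      hcneg
  have hpos := sq_mul_sum_deg_mul_sq_le_adjSum hsymm hh hcut (fun x => (u x)⁺)
    (fun x => posPart_nonneg _) hsupp_pos
  have hneg := sq_mul_sum_deg_mul_sq_le_adjSum hsymm hh hcut (fun x => (u x)⁻)
    (fun x => negPart_nonneg _) hsupp_neg
  refine ⟨c, ?_⟩
  calc h ^ 2 * ∑ x, (deg adj x : ℝ) * u x ^ 2
      = h ^ 2 * ∑ x, (deg adj x : ℝ) * (u x)⁺ ^ 2 +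
          h ^ 2 * ∑ x, (deg adj x : ℝ) * (u x)⁻ ^ 2 := by
        simp only [← mul_add, ← sum_add_distrib, sq_posPart_add_sq_negPart]
    _ ≤ adjSum adj fun x y => ((u x)⁺ - (u y)⁺) ^ 2 + ((u x)⁻ - (u y)⁻) ^ 2 := by
        rw [adjSum_add]
        exact add_le_add hpos hneg
    _ ≤ adjSum adj fun x y => (v x - v y) ^ 2 := adjSum_mono fun x y _ => by
        simpa [u] using sq_posPart_sub_add_sq_negPart_sub_le (u x) (u y)

theorem sq_mul_Mform_le_sq_mul_Lform [DecidableEq ι] (hsymm : ∀ x y, adj x y → adj y x) {h : ℝ}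
    (hh : 0 ≤ h) (hcut : CheegerBound adj h) (hR₀ : 0 ≤ R₀)
    (hlen : ∀ x y, adj x y → 0 < len x y ∧ len x y ≤ R₀) (v : ι → ℝ)
    (horth : ∑ x, massWeight adj len x * v x = 0) :
    h ^ 2 * Mform adj len v ≤ R₀ ^ 2 * Lform adj len v := by
  obtain ⟨c, hc⟩ := exists_sq_mul_sum_deg_mul_sq_sub_le_adjSum hsymm hh hcut v
  have hw : 0 ≤ massWeight adj len := massWeight_nonneg fun x y hxy => (hlen x y hxy).1.le
  calc h ^ 2 * Mform adj len v
      ≤ h ^ 2 * ∑ x, massWeight adj len x * (v x - c) ^ 2 := by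
        rw [Mform_eq_sum_massWeight_mul_sq]
        exact mul_le_mul_of_nonneg_left (sum_mul_sq_le_sum_mul_sub_sq hw horth c) (sq_nonneg h)
    _ ≤ h ^ 2 * ∑ x, R₀ / 2 * deg adj x * (v x - c) ^ 2 := by
        gcongr with x
        exact massWeight_le (fun x y hxy => (hlen x y hxy).2) x
    _ = R₀ / 2 * (h ^ 2 * ∑ x, (deg adj x : ℝ) * (v x - c) ^ 2) := by
        simp only [mul_sum]
        exact sum_congr rfl fun x _ => by ring
    _ ≤ R₀ / 2 * (2 * R₀ * Lform adj len v) :=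
        mul_le_mul_of_nonneg_left (hc.trans (adjSum_sq_sub_le_Lform hlen v)) (by positivity)
    _ = R₀ ^ 2 * Lform adj len v := by ring

end Rayleigh

theorem sq_div_sq_le_lam2 {ι : Type} [Fintype ι] [DecidableEq ι] {adj : ι → ι → Prop} [DecidableRel adj]
    {len : ι → ι → ℝ} {R₀ h : ℝ} (hsymm : ∀ x y, adj x y → adj y x) (hh : 0 ≤ h)
    (hcut : CheegerBound adj h) (hR₀ : 0 < R₀)
    (hlen : ∀ x y, adj x y → 0 < len x y ∧ len x y ≤ R₀) (hw : ∀ x, 0 < massWeight adj len x)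
    {a b : ι} (hab : a ≠ b) :
    h ^ 2 / R₀ ^ 2 ≤ lam2 adj len := by
  obtain ⟨v₀, hv₀, horth₀⟩ := exists_ne_zero_sum_mul_eq_zero hab (hw b).ne'
  refine le_csInf ⟨_, v₀, hv₀, horth₀, rfl⟩ ?_
  rintro t ⟨v, hv, horth, rfl⟩
  have hM : 0 < Mform adj len v := by
    obtain ⟨x, hx⟩ := Function.ne_iff.1 hv
    rw [Mform_eq_sum_massWeight_mul_sq]
    exact sum_pos' (fun y _ => mul_nonneg (hw y).le (sq_nonneg _))
      ⟨x, mem_univ x, mul_pos (hw x) (pow_two_pos_of_ne_zero hx)⟩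
  rw [div_le_div_iff₀ (by positivity) hM]
  linarith [sq_mul_Mform_le_sq_mul_Lform hsymm hh hcut hR₀.le hlen v horth]

/-- If a finite connected graph satisfies a `d`-dimensional isoperimetric inequality with
constant `ν₂`, has volume at most `ν₁ (R/R₀)^d`, and all edge lengths at most `R₀`, then
`λ₂ > 0` and `λ₂^{-1/2} ≤ C R` with `C` depending only on `ν₁`, `ν₂` (and `d`). -/
theorem poincare_constant_from_isoperimetry
    (d : ℕ) (hd : 0 < d) (ν₁ ν₂ : ℝ) (hν₁ : 0 < ν₁) (hν₂ : 0 < ν₂) :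
    ∃ C : ℝ, 0 < C ∧
      ∀ (ι : Type) [Fintype ι] [DecidableEq ι]
        (adj : ι → ι → Prop) [DecidableRel adj] (len : ι → ι → ℝ) (R R₀ : ℝ),
        (∀ x y, adj x y → adj y x) →
        (∀ x, ¬ adj x x) →
        (∀ x y : ι, Relation.ReflTransGen adj x y) →
        (∃ x y : ι, adj x y) →
        (∀ x y, len x y = len y x) →
        0 < R₀ → R₀ ≤ R →
        (∀ x y, adj x y → 0 < len x y ∧ len x y ≤ R₀) →
        ((vol adj (Finset.univ : Finset ι) : ℝ) ≤ ν₁ * (R / R₀) ^ d) →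
        (∀ X : Finset ι, vol adj X ≤ vol adj (Finset.univ \ X) →
          (vol adj X : ℝ) ^ (((d : ℝ) - 1) / (d : ℝ)) ≤
            ν₂ * ((edgeCut adj X).card : ℝ)) →
        0 < lam2 adj len ∧ Real.sqrt (lam2 adj len)⁻¹ ≤ C * R := by
  refine ⟨ν₂ * ν₁ ^ (d : ℝ)⁻¹, by positivity, ?_⟩
  intro ι _ _ adj _ len R R₀ hsymm hirr hconn hedge _ hR₀ hR₀R hlen hvol hiso
  obtain ⟨a, b, hab⟩ := hedge
  have hnbr (x : ι) : ∃ z, adj x z := by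
    rcases (hconn x a).cases_head with rfl | ⟨z, hz, -⟩
    exacts [⟨b, hab⟩, ⟨z, hz⟩]
  have hV : 0 < vol adj univ := by
    refine sum_pos (fun x _ => ?_) ⟨a, mem_univ a⟩
    obtain ⟨z, hz⟩ := hnbr x
    exact card_pos.2 ⟨z, by simpa using hz⟩
  set h := (ν₂ * (vol adj univ : ℝ) ^ (d : ℝ)⁻¹)⁻¹
  have hh : 0 < h := by positivity
  have hlam : h ^ 2 / R₀ ^ 2 ≤ lam2 adj len :=
    sq_div_sq_le_lam2 hsymm hh.le (cheegerBound_of_isoperimetric hd.ne' hν₂ hV hiso) hR₀ hlen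
      (fun x => massWeight_pos (fun x y hxy => (hlen x y hxy).1) (hnbr x))
      (show a ≠ b from fun hab' => hirr b (hab' ▸ hab))
  refine ⟨(by positivity : 0 < h ^ 2 / R₀ ^ 2).trans_le hlam, ?_⟩
  calc Real.sqrt (lam2 adj len)⁻¹ ≤ Real.sqrt (h ^ 2 / R₀ ^ 2)⁻¹ := by gcongr
    _ = R₀ * (ν₂ * (vol adj univ : ℝ) ^ (d : ℝ)⁻¹) := by
        rw [inv_div, ← div_pow, Real.sqrt_sq (by positivity), div_eq_mul_inv, inv_inv]
    _ ≤ R₀ * (ν₂ * (ν₁ ^ (d : ℝ)⁻¹ * (R / R₀))) := by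
        gcongr
        exact rpow_inv_natCast_le_of_le_mul_pow hd.ne' (Nat.cast_nonneg _) hν₁.le
          (div_nonneg (hR₀.le.trans hR₀R) hR₀.le) hvol
    _ = ν₂ * ν₁ ^ (d : ℝ)⁻¹ * R := by field_simp
end
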